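/- In the ERA construction, if H(0) = R_n Σ_n S_n* is a rank-n factorization of the Hankel matrix of Markov parameters Y_k = C A^{k−1} B of a minimal system of order n, then the realization Â = Σ_n^{−1/2} R_n* H(1) S_n Σ_n^{−1/2}, B̂ = first p columns of Σ_n^{1/2} S_n*, Ĉ = first q rows of R_n Σ_n^{1/2} has the same Markov parameters: Ĉ Â^{k−1} B̂ = C A^{k−1} B for all k ≥ 1. -/

import Mathlib

/-!
The block Hankel matrices factor through the system: `H(0) = O K` and `H(1) = O A K`, with `O`,
`K` the extended observability and controllability matrices. The singular value decomposition
gives a second factorization `H(0) = U V` with `U = R_n Σ_n^{1/2}`, `V = Σ_n^{1/2} S_n*`, where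
`U` has the left inverse `U⁺ = Σ_n^{-1/2} R_n*` and `V` the right inverse `V⁺ = S_n Σ_n^{-1/2}`.
Then `P = U⁺ O` and `Q = K V⁺` are mutually inverse `n × n` matrices with `U P = O` and
`V = P K`, and `Â = U⁺ H(1) V⁺ = P A Q` is similar to `A`, so `U Â^k V = O A^k K`. Reading off
the leading block of both sides gives `Ĉ Â^k B̂ = C A^k B`.
-/

open Matrix

section Realization

variable {R : Type*} [CommRing R] {m n l : Type*} [Fintype m] [Fintype n] [Fintype l]
  [DecidableEq n]

theorem mul_pow_mul_eq_of_mul_eq_mul {U' : Matrix n m R} {U : Matrix m n R}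
    {V : Matrix n l R} {V' : Matrix l n R} {O : Matrix m n R} {K : Matrix n l R}
    (hU : U' * U = 1) (hV : V * V' = 1) (hOK : O * K = U * V) (A : Matrix n n R) (k : ℕ) :
    U * (U' * (O * A * K) * V') ^ k * V = O * A ^ k * K := by
  set P := U' * O
  set Q := K * V'
  have hOQ : O * Q = U := by
    rw [← Matrix.mul_assoc, hOK, Matrix.mul_assoc, hV, Matrix.mul_one]
  have hPK : P * K = V := by
    rw [Matrix.mul_assoc, hOK, ← Matrix.mul_assoc, hU, Matrix.one_mul]
  have hQP : Q * P = 1 := mul_eq_one_comm.mp <| by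
    rw [show P * Q = P * K * V' from (Matrix.mul_assoc _ _ _).symm, hPK, hV]
  have hUP : U * P = O := by rw [← hOQ, Matrix.mul_assoc, hQP, Matrix.mul_one]
  have hsemiconj : SemiconjBy P A (P * A * Q) := by
    rw [SemiconjBy, Matrix.mul_assoc _ Q, hQP, Matrix.mul_one]
  calc U * (U' * (O * A * K) * V') ^ k * V = U * (P * A * Q) ^ k * (P * K) := by
        simp only [P, Q, hPK, Matrix.mul_assoc]
    _ = U * P * A ^ k * K := by
        rw [← Matrix.mul_assoc, Matrix.mul_assoc U, ← (hsemiconj.pow_right k).eq]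
        simp only [Matrix.mul_assoc]
    _ = O * A ^ k * K := by rw [hUP]

end Realization

section Hankel

variable {R : Type*} [Semiring R] {n p q : Type*} [Fintype n] [DecidableEq n]
  (C : Matrix q n R) (A : Matrix n n R) (B : Matrix n p R)

def observabilityMatrix (α : ℕ) : Matrix (Fin α × q) n R :=
  of fun ia j => (C * A ^ (ia.1 : ℕ)) ia.2 j

def controllabilityMatrix (β : ℕ) : Matrix n (Fin β × p) R :=
  of fun i jb => (A ^ (jb.1 : ℕ) * B) i jb.2

theorem observabilityMatrix_mul_pow_mul_controllabilityMatrix (α β s : ℕ) :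
    observabilityMatrix C A α * A ^ s * controllabilityMatrix A B β =
      of fun ia jb => (C * A ^ ((ia.1 : ℕ) + (jb.1 : ℕ) + s) * B) ia.2 jb.2 := by
  ext ⟨i, a⟩ ⟨j, b⟩
  have hsplit : C * A ^ ((i : ℕ) + (j : ℕ) + s) * B =
      C * A ^ (i : ℕ) * A ^ s * (A ^ (j : ℕ) * B) := by
    rw [add_right_comm, pow_add, pow_add]
    simp only [Matrix.mul_assoc]
  rw [of_apply, hsplit]
  simp only [observabilityMatrix, controllabilityMatrix, mul_apply, of_apply]

theorem submatrix_observabilityMatrix_mul_pow_mul_controllabilityMatrix {α β : ℕ}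
    (hα : 0 < α) (hβ : 0 < β) (s : ℕ) :
    (observabilityMatrix C A α * A ^ s * controllabilityMatrix A B β).submatrix
      (fun a => (⟨0, hα⟩, a)) (fun b => (⟨0, hβ⟩, b)) = C * A ^ s * B := by
  rw [observabilityMatrix_mul_pow_mul_controllabilityMatrix]
  ext a b
  simp

end Hankel

section Diagonal

variable {n : Type*} [Fintype n] [DecidableEq n]

theorem diagonal_ofReal_sqrt_mul_self {σ : n → ℝ} (hσ : ∀ i, 0 ≤ σ i) :
    (diagonal fun i => ((√(σ i) : ℝ) : ℂ)) * (diagonal fun i => ((√(σ i) : ℝ) : ℂ)) =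
      diagonal fun i => (σ i : ℂ) := by
  rw [diagonal_mul_diagonal]
  congr 1 with i
  rw [← Complex.ofReal_mul, Real.mul_self_sqrt (hσ i)]

theorem diagonal_ofReal_inv_mul_self {x : n → ℝ} (hx : ∀ i, x i ≠ 0) :
    (diagonal fun i => (((x i)⁻¹ : ℝ) : ℂ)) * (diagonal fun i => (x i : ℂ)) = 1 := by
  rw [diagonal_mul_diagonal, ← diagonal_one]
  congr 1 with i
  rw [← Complex.ofReal_mul, inv_mul_cancel₀ (hx i), Complex.ofReal_one]

end Diagonal

theorem stmt19_general {n p q α β : ℕ} (hα : 0 < α) (hβ : 0 < β)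
    (A : Matrix (Fin n) (Fin n) ℂ) (B : Matrix (Fin n) (Fin p) ℂ)
    (C : Matrix (Fin q) (Fin n) ℂ)
    (σ : Fin n → ℝ) (hσ : ∀ i, 0 < σ i)
    (Rn : Matrix (Fin α × Fin q) (Fin n) ℂ) (Sn : Matrix (Fin β × Fin p) (Fin n) ℂ)
    -- R_n, S_n have orthonormal columns and Σ_n is the diagonal of nonzero singular values
    (hR : Rnᴴ * Rn = 1) (hS : Snᴴ * Sn = 1)
    (hfact : (Matrix.of fun (ia : Fin α × Fin q) (jb : Fin β × Fin p) =>
        (C * A ^ ((ia.1 : ℕ) + (jb.1 : ℕ)) * B) ia.2 jb.2) =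
      Rn * Matrix.diagonal (fun i => (σ i : ℂ)) * Snᴴ) :
    ∀ k : ℕ,
      (Matrix.of fun (a : Fin q) (i : Fin n) =>
          (Rn * Matrix.diagonal fun i' => ((Real.sqrt (σ i') : ℝ) : ℂ)) (⟨0, hα⟩, a) i) *
        ((Matrix.diagonal fun i' => (((Real.sqrt (σ i'))⁻¹ : ℝ) : ℂ)) * Rnᴴ *
          (Matrix.of fun (ia : Fin α × Fin q) (jb : Fin β × Fin p) =>
            (C * A ^ ((ia.1 : ℕ) + (jb.1 : ℕ) + 1) * B) ia.2 jb.2) * Sn *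
          (Matrix.diagonal fun i' => (((Real.sqrt (σ i'))⁻¹ : ℝ) : ℂ))) ^ k *
        (Matrix.of fun (i : Fin n) (b : Fin p) =>
          ((Matrix.diagonal fun i' => ((Real.sqrt (σ i') : ℝ) : ℂ)) * Snᴴ) i (⟨0, hβ⟩, b)) =
      C * A ^ k * B := by
  intro k
  set O := observabilityMatrix C A α
  set K := controllabilityMatrix A B β
  set E := diagonal fun i => ((√(σ i) : ℝ) : ℂ)
  set E' := diagonal fun i => (((√(σ i))⁻¹ : ℝ) : ℂ)
  have hE'E : E' * E = 1 := diagonal_ofReal_inv_mul_self fun i => (Real.sqrt_pos.mpr (hσ i)).ne'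
  have hU : (E' * Rnᴴ) * (Rn * E) = 1 := by
    rw [Matrix.mul_assoc, ← Matrix.mul_assoc Rnᴴ, hR, Matrix.one_mul, hE'E]
  have hV : (E * Snᴴ) * (Sn * E') = 1 := by
    rw [Matrix.mul_assoc, ← Matrix.mul_assoc Snᴴ, hS, Matrix.one_mul, mul_eq_one_comm.mp hE'E]
  have hOK : O * K = (Rn * E) * (E * Snᴴ) := by
    have hH0 := observabilityMatrix_mul_pow_mul_controllabilityMatrix C A B α β 0
    simp only [pow_zero, Matrix.mul_one, add_zero] at hH0
    rw [hH0, hfact, ← diagonal_ofReal_sqrt_mul_self fun i => (hσ i).le]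
    simp only [E, Matrix.mul_assoc]
  have hH1 := observabilityMatrix_mul_pow_mul_controllabilityMatrix C A B α β 1
  rw [pow_one] at hH1
  rw [← submatrix_observabilityMatrix_mul_pow_mul_controllabilityMatrix C A B hα hβ k,
    ← mul_pow_mul_eq_of_mul_eq_mul hU hV hOK, hH1,
    submatrix_mul _ _ _ id _ Function.bijective_id, submatrix_mul _ _ _ id _ Function.bijective_id]
  simp only [Matrix.mul_assoc]
  rfl

/-- ERA: if `H(0) = R_n Σ_n S_n*` is a rank-`n` factorization (from the SVD) of the block
Hankel matrix of Markov parameters `Y_k = C A^{k−1} B` of a minimal system of order `n`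
(the extended observability and controllability matrices have rank `n`), then the
realization `Â = Σ_n^{−1/2} R_n* H(1) S_n Σ_n^{−1/2}`, `B̂ = ` first `p` columns of
`Σ_n^{1/2} S_n*`, `Ĉ = ` first `q` rows of `R_n Σ_n^{1/2}` has the same Markov
parameters: `Ĉ Â^{k−1} B̂ = C A^{k−1} B` for all `k ≥ 1`. -/
theorem stmt19 {n p q α β : ℕ} (hα : 0 < α) (hβ : 0 < β)
    (A : Matrix (Fin n) (Fin n) ℂ) (B : Matrix (Fin n) (Fin p) ℂ)
    (C : Matrix (Fin q) (Fin n) ℂ)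
    (σ : Fin n → ℝ) (hσ : ∀ i, 0 < σ i)
    (Rn : Matrix (Fin α × Fin q) (Fin n) ℂ) (Sn : Matrix (Fin β × Fin p) (Fin n) ℂ)
    -- minimality: extended observability and controllability matrices have rank n
    (hobs : (Matrix.of fun (ia : Fin α × Fin q) (j : Fin n) =>
      (C * A ^ (ia.1 : ℕ)) ia.2 j).rank = n)
    (hctr : (Matrix.of fun (i : Fin n) (jb : Fin β × Fin p) =>
      (A ^ (jb.1 : ℕ) * B) i jb.2).rank = n)
    -- R_n, S_n have orthonormal columns and Σ_n is the diagonal of nonzero singular values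
    (hR : Rnᴴ * Rn = 1) (hS : Snᴴ * Sn = 1)
    (hfact : (Matrix.of fun (ia : Fin α × Fin q) (jb : Fin β × Fin p) =>
        (C * A ^ ((ia.1 : ℕ) + (jb.1 : ℕ)) * B) ia.2 jb.2) =
      Rn * Matrix.diagonal (fun i => (σ i : ℂ)) * Snᴴ) :
    ∀ k : ℕ,
      (Matrix.of fun (a : Fin q) (i : Fin n) =>
          (Rn * Matrix.diagonal fun i' => ((Real.sqrt (σ i') : ℝ) : ℂ)) (⟨0, hα⟩, a) i) *
        ((Matrix.diagonal fun i' => (((Real.sqrt (σ i'))⁻¹ : ℝ) : ℂ)) * Rnᴴ *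
          (Matrix.of fun (ia : Fin α × Fin q) (jb : Fin β × Fin p) =>
            (C * A ^ ((ia.1 : ℕ) + (jb.1 : ℕ) + 1) * B) ia.2 jb.2) * Sn *
          (Matrix.diagonal fun i' => (((Real.sqrt (σ i'))⁻¹ : ℝ) : ℂ))) ^ k *
        (Matrix.of fun (i : Fin n) (b : Fin p) =>
          ((Matrix.diagonal fun i' => ((Real.sqrt (σ i') : ℝ) : ℂ)) * Snᴴ) i (⟨0, hβ⟩, b)) =
      C * A ^ k * B :=
  stmt19_general hα hβ A B C σ hσ Rn Sn hR hS hfact
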